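/- arXiv:1805.05386 — 2 statements merged into one kernel-verified Lean document; each statement's English description precedes it below -/
import Mathlib

section
/- For every polynomial u ∈ 𝕋_s[z] there exists U ∈ 𝕋_s[z] such that U^{(−1)} − U = u, where twisting acts coefficient-wise via the inverse Frobenius on 𝕋_s and fixes z. -/
open Filter

noncomputable section

/-- Membership in the Tate algebra `𝕋_s` over `K`: the coefficients tend to `0`
(for every `ε > 0` only finitely many coefficients have norm `≥ ε`). -/
def IsTate (K : Type) [NontriviallyNormedField K] (s : ℕ)
    (f : MvPowerSeries (Fin s) K) : Prop :=
  ∀ ε : ℝ, 0 < ε → {ν : Fin s →₀ ℕ | ε ≤ ‖MvPowerSeries.coeff ν f‖}.Finite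

/-- The Gauss norm `‖f‖_∞ = sup_ν |a_ν|` on the Tate algebra. -/
def gaussNorm (K : Type) [NontriviallyNormedField K] (s : ℕ)
    (f : MvPowerSeries (Fin s) K) : ℝ :=
  ⨆ ν : Fin s →₀ ℕ, ‖MvPowerSeries.coeff ν f‖

/-- The coefficient-wise twist of a power series induced by a ring endomorphism of `K`. -/
def twPS (K : Type) [NontriviallyNormedField K] (s : ℕ) (τK : K →+* K) :
    MvPowerSeries (Fin s) K →+* MvPowerSeries (Fin s) K :=
  MvPowerSeries.map (σ := Fin s) τK

/-!
Coefficientwise, `U^{(-1)} - U = u` asks for `x` with `τ⁻¹ x - x = a`, i.e. a root of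
`X^q - X + a^q`. The product of its `q` roots is `±a^q`, so a root of minimal norm has
`‖x‖ ≤ ‖a‖` (in particular `x = 0` for `a = 0`). Choosing such roots for all coefficients of `u`
gives `U`, whose coefficients are dominated by those of `u` and hence still tend to `0`.
-/

open Polynomial

theorem Polynomial.Monic.exists_mem_roots_nnnorm_pow_le {K : Type*} [NormedField K]
    {p : K[X]} (hm : p.Monic) (hs : p.Splits) (hp : p.natDegree ≠ 0) :
    ∃ x ∈ p.roots, ‖x‖₊ ^ p.natDegree ≤ ‖p.coeff 0‖₊ := by
  have hcard := splits_iff_card_roots.mp hs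
  have hne : p.roots ≠ 0 := fun h => hp (by simpa [h] using hcard.symm)
  obtain ⟨x, hx, hmin⟩ := Multiset.exists_min_image (‖·‖₊) hne
  refine ⟨x, hx, ?_⟩
  calc ‖x‖₊ ^ p.natDegree = ‖x‖₊ ^ (p.roots.map (‖·‖₊)).card := by simp [hcard]
    _ ≤ (p.roots.map (‖·‖₊)).prod :=
      Multiset.pow_card_le_prod (Multiset.forall_mem_map_iff.mpr hmin)
    _ = ‖p.roots.prod‖₊ := by simpa using Multiset.prod_hom p.roots (nnnormHom (α := K))
    _ = ‖p.coeff 0‖₊ := by simp [hs.coeff_zero_eq_prod_roots_of_monic hm]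

theorem exists_sub_pow_eq_pow_norm_le {K : Type*} [NormedField K] [IsAlgClosed K]
    {q : ℕ} (hq : 2 ≤ q) (a : K) : ∃ x : K, x - x ^ q = a ^ q ∧ ‖x‖ ≤ ‖a‖ := by
  set p : K[X] := X ^ q + (C (a ^ q) - X)
  have hlow : (C (a ^ q) - X : K[X]).degree < q := by
    refine (degree_sub_le _ _).trans_lt (max_lt ?_ ?_)
    · exact degree_C_le.trans_lt (by exact_mod_cast (by omega : 0 < q))
    · rw [degree_X]; exact_mod_cast (by omega : 1 < q)
  have hm : p.Monic := monic_X_pow_add hlow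
  have hdeg : p.natDegree = q := by
    rw [natDegree_add_eq_left_of_degree_lt (by rwa [degree_X_pow]), natDegree_X_pow]
  obtain ⟨x, hx, hle⟩ :=
    hm.exists_mem_roots_nnnorm_pow_le (IsAlgClosed.splits p) (by omega)
  have hroot : x ^ q + (a ^ q - x) = 0 := by simpa [p] using (mem_roots hm.ne_zero).mp hx
  have hc0 : p.coeff 0 = a ^ q := by
    simp [p, coeff_X, coeff_X_pow, coeff_C_zero, -map_pow, show 0 ≠ q by omega]
  rw [hdeg, hc0, nnnorm_pow] at hle
  exact ⟨x, by linear_combination -hroot,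
    (pow_le_pow_iff_left₀ (norm_nonneg _) (norm_nonneg _) (by omega)).mp hle⟩

theorem IsTate.of_norm_coeff_le {K : Type} [NontriviallyNormedField K] {s : ℕ}
    {f g : MvPowerSeries (Fin s) K} (hf : IsTate K s f)
    (hgf : ∀ ν, ‖MvPowerSeries.coeff ν g‖ ≤ ‖MvPowerSeries.coeff ν f‖) :
    IsTate K s g :=
  fun ε hε => (hf ε hε).subset fun ν hν => le_trans hν (hgf ν)

theorem Polynomial.exists_coeff_eq_apply_coeff {R : Type*} [Semiring R] (L : R → R)
    (hL : L 0 = 0) (u : R[X]) : ∃ U : R[X], ∀ i, U.coeff i = L (u.coeff i) :=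
  ⟨⟨⟨Finsupp.mapRange L hL u.toFinsupp.coeff⟩⟩, fun _ => rfl⟩

theorem stmt8_general
    (K : Type) [NontriviallyNormedField K]
    [IsAlgClosed K]
    (q : ℕ) (hq : IsPrimePow q)
    (τK : K ≃+* K) (hτK : ∀ x : K, τK x = x ^ q)
    (s : ℕ)
    (u : Polynomial (MvPowerSeries (Fin s) K)) (hu : ∀ i : ℕ, IsTate K s (u.coeff i)) :
    ∃ U : Polynomial (MvPowerSeries (Fin s) K), (∀ i : ℕ, IsTate K s (U.coeff i)) ∧
      U.map (twPS K s (τK.symm : K ≃+* K).toRingHom) - U = u := by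
  choose R hR hRle using exists_sub_pow_eq_pow_norm_le (K := K) hq.two_le
  have hRtw (a : K) : τK.symm (R a) - R a = a :=
    τK.injective (by rw [map_sub, RingEquiv.apply_symm_apply, hτK, hτK, hR])
  have hR0 : R 0 = 0 := norm_le_zero_iff.mp (by simpa using hRle 0)
  let L : MvPowerSeries (Fin s) K → MvPowerSeries (Fin s) K := fun f ν => R (f ν)
  obtain ⟨U, hU⟩ := exists_coeff_eq_apply_coeff L (funext fun _ => hR0) u
  refine ⟨U, fun i => (hu i).of_norm_coeff_le fun ν => ?_, ?_⟩
  · rw [hU]; exact hRle _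
  · ext i ν
    simp only [coeff_sub, coeff_map, map_sub, hU]
    exact hRtw _

/-- for every `u ∈ 𝕋_s[z]` there exists `U ∈ 𝕋_s[z]` with
`U^{(-1)} - U = u`, where the twist acts coefficient-wise (via the inverse Frobenius
`τ⁻¹` on `𝕋_s`) and fixes `z`. -/
theorem stmt8
    (K : Type) [NontriviallyNormedField K] [IsUltrametricDist K] [CompleteSpace K]
    [IsAlgClosed K]
    (q : ℕ) (hq : IsPrimePow q)
    (τK : K ≃+* K) (hτK : ∀ x : K, τK x = x ^ q)
    (s : ℕ)
    (u : Polynomial (MvPowerSeries (Fin s) K)) (hu : ∀ i : ℕ, IsTate K s (u.coeff i)) :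
    ∃ U : Polynomial (MvPowerSeries (Fin s) K), (∀ i : ℕ, IsTate K s (U.coeff i)) ∧
      U.map (twPS K s (τK.symm : K ≃+* K).toRingHom) - U = u :=
  stmt8_general K q hq τK hτK s u hu
end
end

section
/- Let φ be a Drinfeld A[t_1,…,t_s]-module of rank r with A_r ∈ 𝕋_s^×. Then the de Rham module H*_DR(φ) = Der(φ)/Der_si(φ) is a free 𝕋_s-module of rank r, with basis the classes of δ^0, δ^1, …, δ^{r−1}, where δ^0 = η^{{1}} (so δ^0_θ = φ_θ − θ) and δ^i is the biderivation with δ^i_θ = τ^i for 1 ≤ i ≤ r−1. -/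
open Filter

noncomputable section

/-- The subring `𝔽_q[t_1,…,t_s]` of `𝕋_s`: generated by the variables and the
`𝔽_q`-constants (elements of `K` fixed by the `q`-power map). -/
def FqTSub (K : Type) [NontriviallyNormedField K] (s q : ℕ) :
    Subring (MvPowerSeries (Fin s) K) :=
  Subring.closure
    (Set.range (MvPowerSeries.X : Fin s → MvPowerSeries (Fin s) K) ∪
      {f | ∃ x : K, x ^ q = x ∧ f = MvPowerSeries.C (σ := Fin s) (R := K) x})

/-- The subring `A[t_1,…,t_s] = 𝔽_q[θ][t_1,…,t_s]` of `𝕋_s`. -/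
def AtsSub (K : Type) [NontriviallyNormedField K] (s q : ℕ) (θ : K) :
    Subring (MvPowerSeries (Fin s) K) :=
  Subring.closure
    ({MvPowerSeries.C (σ := Fin s) (R := K) θ} ∪
      Set.range (MvPowerSeries.X : Fin s → MvPowerSeries (Fin s) K) ∪
      {f | ∃ x : K, x ^ q = x ∧ f = MvPowerSeries.C (σ := Fin s) (R := K) x})

/-- Multiplication in the twisted polynomial ring `𝕋_s[τ]` (with `τ f = f^{(1)} τ`),
where a twisted polynomial `Σ_i c_i τ^i` is encoded as the finitely supported
function `i ↦ c_i`. -/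
def tmulPS (K : Type) [NontriviallyNormedField K] (s : ℕ)
    (tw : MvPowerSeries (Fin s) K →+* MvPowerSeries (Fin s) K)
    (f g : ℕ →₀ MvPowerSeries (Fin s) K) : ℕ →₀ MvPowerSeries (Fin s) K :=
  f.sum fun i c => g.sum fun j d => Finsupp.single (i + j) (c * (⇑tw)^[i] d)

/-- Left multiplication of a twisted polynomial by the scalar `c ∈ 𝕋_s`. -/
def cSMul (K : Type) [NontriviallyNormedField K] (s : ℕ)
    (c : MvPowerSeries (Fin s) K) (h : ℕ →₀ MvPowerSeries (Fin s) K) :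
    ℕ →₀ MvPowerSeries (Fin s) K :=
  Finsupp.mapRange (fun x => c * x) (mul_zero c) h

/-- `φ : A[t_1,…,t_s] → 𝕋_s[τ]` is the Drinfeld-module structure map: an
`𝔽_q[t_1,…,t_s]`-algebra homomorphism into the twisted polynomial ring sending
`θ` to `Dθ = θ + A_1 τ + ⋯ + A_r τ^r`. -/
def IsDrinfeldHom (K : Type) [NontriviallyNormedField K] (s q : ℕ) (θ : K)
    (tw : MvPowerSeries (Fin s) K →+* MvPowerSeries (Fin s) K)
    (Dθ : ℕ →₀ MvPowerSeries (Fin s) K)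
    (φ : AtsSub K s q θ → (ℕ →₀ MvPowerSeries (Fin s) K)) : Prop :=
  (∀ a b, φ (a + b) = φ a + φ b) ∧
  (∀ a b, φ (a * b) = tmulPS K s tw (φ a) (φ b)) ∧
  (∀ a : AtsSub K s q θ,
    (a : MvPowerSeries (Fin s) K) = MvPowerSeries.C (σ := Fin s) (R := K) θ → φ a = Dθ) ∧
  (∀ a : AtsSub K s q θ, (a : MvPowerSeries (Fin s) K) ∈ FqTSub K s q →
    φ a = Finsupp.single 0 (a : MvPowerSeries (Fin s) K)) ∧
  (∀ a n, IsTate K s (φ a n))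

/-- `η` is a biderivation for `φ`: an `𝔽_q[t_1,…,t_s]`-linear map
`A[t_1,…,t_s] → τ𝕋_s[τ]` with `η_{ab} = a η_b + η_a φ_b`. -/
def IsBider (K : Type) [NontriviallyNormedField K] (s q : ℕ) (θ : K)
    (tw : MvPowerSeries (Fin s) K →+* MvPowerSeries (Fin s) K)
    (φ : AtsSub K s q θ → (ℕ →₀ MvPowerSeries (Fin s) K))
    (η : AtsSub K s q θ → (ℕ →₀ MvPowerSeries (Fin s) K)) : Prop :=
  (∀ a b, η (a + b) = η a + η b) ∧
  (∀ v a : AtsSub K s q θ, (v : MvPowerSeries (Fin s) K) ∈ FqTSub K s q →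
    η (v * a) = cSMul K s (v : MvPowerSeries (Fin s) K) (η a)) ∧
  (∀ a, η a 0 = 0) ∧
  (∀ a n, IsTate K s (η a n)) ∧
  (∀ a b, η (a * b)
    = cSMul K s (a : MvPowerSeries (Fin s) K) (η b) + tmulPS K s tw (η a) (φ b))

/-!
Write `D = φ_θ = θ + A_1 τ + ⋯ + A_r τ^r`. Multiplying `c τ^k` on the right by `D` gives the
leading term `c A_r^{(k)} τ^{k+r}` with `A_r^{(k)}` a unit, so subtracting inner values
`m D - θ m` (`m ∈ τ𝕋_s[τ]`) lowers the degree of `η_θ ∈ τ𝕋_s[τ]` down to `r`. In degree `≤ r`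
the `δ^i_θ` form a basis: the `τ^r`-coefficient forces `c_0 = h_r / A_r`, and then
`c_i = h_i - c_0 A_i`. Uniqueness follows because a nonzero inner value has degree `> r`,
while `Σ c_i δ^i_θ` has degree `≤ r`.
-/

open MvPowerSeries Topology Finset.HasAntidiagonal

section Tate

variable {K : Type} [NontriviallyNormedField K] {s : ℕ}

lemma isTate_iff_tendsto {f : MvPowerSeries (Fin s) K} :
    IsTate K s f ↔ Tendsto (fun ν => coeff ν f) cofinite (𝓝 0) := by
  simp only [NormedAddGroup.tendsto_nhds_zero, eventually_cofinite, not_lt, IsTate]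

lemma isTate_iff_isRestricted {f : MvPowerSeries (Fin s) K} :
    IsTate K s f ↔ IsRestricted 1 f := by
  simp [isTate_iff_tendsto, IsRestricted, Finsupp.prod, tendsto_zero_iff_norm_tendsto_zero]

lemma isTate_zero : IsTate K s 0 :=
  isTate_iff_isRestricted.2 (isRestricted_zero 1)

lemma isTate_C (x : K) : IsTate K s (C x) :=
  isTate_iff_isRestricted.2 (isRestricted_C 1 x)

lemma IsTate.add {f g : MvPowerSeries (Fin s) K} (hf : IsTate K s f) (hg : IsTate K s g) :
    IsTate K s (f + g) :=
  isTate_iff_isRestricted.2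
    (isRestricted.add 1 (isTate_iff_isRestricted.1 hf) (isTate_iff_isRestricted.1 hg))

lemma IsTate.sub {f g : MvPowerSeries (Fin s) K} (hf : IsTate K s f) (hg : IsTate K s g) :
    IsTate K s (f - g) :=
  sub_eq_add_neg f g ▸ hf.add
    (isTate_iff_isRestricted.2 (isRestricted.neg 1 (isTate_iff_isRestricted.1 hg)))

lemma IsTate.mul [IsUltrametricDist K] {f g : MvPowerSeries (Fin s) K} (hf : IsTate K s f)
    (hg : IsTate K s g) : IsTate K s (f * g) :=
  isTate_iff_isRestricted.2
    (isRestricted.mul 1 (isTate_iff_isRestricted.1 hf) (isTate_iff_isRestricted.1 hg))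

lemma isTate_twPS {τ : K →+* K} (hτ : Tendsto τ (𝓝 0) (𝓝 0)) {f : MvPowerSeries (Fin s) K}
    (hf : IsTate K s f) : IsTate K s (twPS K s τ f) := by
  rw [isTate_iff_tendsto] at hf ⊢
  exact hτ.comp hf

lemma isTate_iterate {tw : MvPowerSeries (Fin s) K → MvPowerSeries (Fin s) K}
    (htw : ∀ f, IsTate K s f → IsTate K s (tw f)) (k : ℕ) {f : MvPowerSeries (Fin s) K}
    (hf : IsTate K s f) : IsTate K s (tw^[k] f) := by
  induction k generalizing f with
  | zero => exact hf
  | succ k ih => exact ih (htw f hf)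

end Tate

section TwistedPolynomial

variable {K : Type} [NontriviallyNormedField K] {s : ℕ}
  (tw : MvPowerSeries (Fin s) K →+* MvPowerSeries (Fin s) K)

lemma cSMul_eq_smul (c : MvPowerSeries (Fin s) K) (f : ℕ →₀ MvPowerSeries (Fin s) K) :
    cSMul K s c f = c • f :=
  rfl

lemma tmulPS_apply (f g : ℕ →₀ MvPowerSeries (Fin s) K) (n : ℕ) :
    tmulPS K s tw f g n = ∑ p ∈ antidiagonal n, f p.1 * tw^[p.1] (g p.2) := by
  classical
  have inner : ∀ i c, (g.sum fun j d => Finsupp.single (i + j) (c * tw^[i] d)) n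
      = if i ≤ n then c * tw^[i] (g (n - i)) else 0 := by
    intro i c
    rw [Finsupp.sum_apply, Finsupp.sum_eq_single (n - i)]
    · split_ifs with h
      · rw [Nat.add_sub_cancel' h, Finsupp.single_eq_same]
      · rw [Finsupp.single_apply, if_neg (by omega)]
    · intro j _ hj
      rw [Finsupp.single_apply, if_neg (by omega)]
    · simp
  rw [tmulPS, Finsupp.sum_apply, Finsupp.sum, Finset.sum_congr rfl (fun i _ => inner i (f i)),
    Finset.Nat.sum_antidiagonal_eq_sum_range_succ_mk, ← Finset.sum_filter]
  refine Finset.sum_subset (fun i => by simp) (fun i hi hni => ?_)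
  simp_all

@[simp]
lemma tmulPS_zero_left (g : ℕ →₀ MvPowerSeries (Fin s) K) : tmulPS K s tw 0 g = 0 := by
  simp [tmulPS]

lemma tmulPS_add_left (f f' g : ℕ →₀ MvPowerSeries (Fin s) K) :
    tmulPS K s tw (f + f') g = tmulPS K s tw f g + tmulPS K s tw f' g := by
  ext n
  simp [tmulPS_apply, add_mul, Finset.sum_add_distrib]

lemma tmulPS_sub_left (f f' g : ℕ →₀ MvPowerSeries (Fin s) K) :
    tmulPS K s tw (f - f') g = tmulPS K s tw f g - tmulPS K s tw f' g := by
  ext n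
  simp [tmulPS_apply, sub_mul, Finset.sum_sub_distrib]

lemma tmulPS_apply_eq_zero_of_lt {f g : ℕ →₀ MvPowerSeries (Fin s) K} {d e n : ℕ}
    (hf : ∀ i, d < i → f i = 0) (hg : ∀ j, e < j → g j = 0) (hn : d + e < n) :
    tmulPS K s tw f g n = 0 := by
  rw [tmulPS_apply]
  refine Finset.sum_eq_zero fun p hp => ?_
  rw [mem_antidiagonal] at hp
  rcases lt_or_ge d p.1 with h | h
  · rw [hf _ h, zero_mul]
  · rw [hg _ (by omega), iterate_map_zero, mul_zero]

lemma tmulPS_apply_add {f g : ℕ →₀ MvPowerSeries (Fin s) K} {d e : ℕ}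
    (hf : ∀ i, d < i → f i = 0) (hg : ∀ j, e < j → g j = 0) :
    tmulPS K s tw f g (d + e) = f d * tw^[d] (g e) := by
  rw [tmulPS_apply, Finset.sum_eq_single_of_mem (d, e) (mem_antidiagonal.2 rfl)]
  rintro ⟨i, j⟩ hp hne
  rw [mem_antidiagonal] at hp
  rcases lt_or_ge d i with h | h
  · rw [hf _ h, zero_mul]
  · rw [hg j (by grind), iterate_map_zero, mul_zero]

lemma isTate_tmulPS_apply [IsUltrametricDist K] (htw : ∀ f, IsTate K s f → IsTate K s (tw f))
    {f g : ℕ →₀ MvPowerSeries (Fin s) K} (hf : ∀ n, IsTate K s (f n))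
    (hg : ∀ n, IsTate K s (g n)) (n : ℕ) : IsTate K s (tmulPS K s tw f g n) := by
  rw [tmulPS_apply]
  exact Finset.sum_induction _ (IsTate K s) (fun _ _ => IsTate.add) isTate_zero
    fun p _ => (hf _).mul (isTate_iterate htw _ (hg _))

end TwistedPolynomial

section InnerValue

variable {K : Type} [NontriviallyNormedField K] {s : ℕ}
  (tw : MvPowerSeries (Fin s) K →+* MvPowerSeries (Fin s) K) (θ : K)
  (D : ℕ →₀ MvPowerSeries (Fin s) K)

/-- The value `m φ_θ - θ m` at `θ` of the inner biderivation `η^{(m)}`, where `D = φ_θ`. -/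
def innerValue (m : ℕ →₀ MvPowerSeries (Fin s) K) : ℕ →₀ MvPowerSeries (Fin s) K :=
  tmulPS K s tw m D - cSMul K s (C θ) m

@[simp]
lemma innerValue_zero : innerValue tw θ D 0 = 0 := by
  simp [innerValue, cSMul_eq_smul]

lemma innerValue_add (m m' : ℕ →₀ MvPowerSeries (Fin s) K) :
    innerValue tw θ D (m + m') = innerValue tw θ D m + innerValue tw θ D m' := by
  simp only [innerValue, tmulPS_add_left, cSMul_eq_smul, smul_add]
  abel

lemma innerValue_sub (m m' : ℕ →₀ MvPowerSeries (Fin s) K) :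
    innerValue tw θ D (m - m') = innerValue tw θ D m - innerValue tw θ D m' := by
  simp only [innerValue, tmulPS_sub_left, cSMul_eq_smul, smul_sub]
  abel

lemma innerValue_apply (m : ℕ →₀ MvPowerSeries (Fin s) K) (n : ℕ) :
    innerValue tw θ D m n = tmulPS K s tw m D n - C θ * m n :=
  rfl

lemma innerValue_apply_zero {m : ℕ →₀ MvPowerSeries (Fin s) K} (hm0 : m 0 = 0) :
    innerValue tw θ D m 0 = 0 := by
  simp [innerValue_apply, tmulPS_apply, hm0]

variable {θ D} {r : ℕ}

lemma innerValue_apply_eq_zero_of_lt (hD : ∀ n, r < n → D n = 0)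
    {m : ℕ →₀ MvPowerSeries (Fin s) K} {d n : ℕ} (hm : ∀ i, d < i → m i = 0) (hn : d + r < n) :
    innerValue tw θ D m n = 0 := by
  rw [innerValue_apply, tmulPS_apply_eq_zero_of_lt tw hm hD hn, hm n (by omega), mul_zero,
    sub_zero]

lemma innerValue_apply_add (hr : 0 < r) (hD : ∀ n, r < n → D n = 0)
    {m : ℕ →₀ MvPowerSeries (Fin s) K} {d : ℕ} (hm : ∀ i, d < i → m i = 0) :
    innerValue tw θ D m (d + r) = m d * tw^[d] (D r) := by
  rw [innerValue_apply, tmulPS_apply_add tw hm hD, hm (d + r) (by omega), mul_zero, sub_zero]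

lemma isTate_innerValue_apply [IsUltrametricDist K]
    (htw : ∀ f, IsTate K s f → IsTate K s (tw f)) (hDT : ∀ n, IsTate K s (D n))
    {m : ℕ →₀ MvPowerSeries (Fin s) K} (hm : ∀ n, IsTate K s (m n)) (n : ℕ) :
    IsTate K s (innerValue tw θ D m n) := by
  rw [innerValue_apply]
  exact (isTate_tmulPS_apply tw htw hm hDT n).sub ((isTate_C θ).mul (hm n))

end InnerValue

section Basis

variable {K : Type} [NontriviallyNormedField K] {s : ℕ}

/-- The values `δ^0_θ = φ_θ - θ` and `δ^i_θ = τ^i` (`0 < i < r`) of the basis biderivations,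
where `D = φ_θ`. -/
def deltaValue (θ : K) (D : ℕ →₀ MvPowerSeries (Fin s) K) {r : ℕ} (i : Fin r) :
    ℕ →₀ MvPowerSeries (Fin s) K :=
  if (i : ℕ) = 0 then D - Finsupp.single 0 (C θ) else Finsupp.single (i : ℕ) 1

variable {θ : K} {D : ℕ →₀ MvPowerSeries (Fin s) K} {r : ℕ}

lemma sum_cSMul_deltaValue_apply (hr : 0 < r) (hD0 : D 0 = C θ)
    (c : Fin r → MvPowerSeries (Fin s) K) (n : ℕ) :
    (∑ i, cSMul K s (c i) (deltaValue θ D i)) n =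
      if n = 0 then 0 else c ⟨0, hr⟩ * D n + if h : n < r then c ⟨n, h⟩ else 0 := by
  classical
  have hrest : ∀ i ∈ Finset.univ.erase (⟨0, hr⟩ : Fin r),
      cSMul K s (c i) (deltaValue θ D i) n = if (i : ℕ) = n then c i else 0 := by
    intro i hi
    have hi0 : (i : ℕ) ≠ 0 := fun h => Finset.ne_of_mem_erase hi (Fin.ext h)
    simp [cSMul_eq_smul, deltaValue, hi0, Finsupp.single_apply]
  rw [Finsupp.finsetSum_apply, ← Finset.add_sum_erase _ _ (Finset.mem_univ ⟨0, hr⟩),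
    Finset.sum_congr rfl hrest, cSMul_eq_smul, Finsupp.smul_apply, deltaValue, if_pos rfl,
    Finsupp.sub_apply, Finsupp.single_apply, smul_eq_mul]
  rcases eq_or_ne n 0 with rfl | hn0
  · rw [if_pos rfl, if_pos rfl, hD0, sub_self, mul_zero, zero_add]
    exact Finset.sum_eq_zero fun i hi => if_neg fun h => Finset.ne_of_mem_erase hi (Fin.ext h)
  rw [if_neg hn0.symm, if_neg hn0, sub_zero]
  split_ifs with hnr
  · rw [Finset.sum_eq_single_of_mem (⟨n, hnr⟩ : Fin r) (by simp [Fin.ext_iff, hn0]), if_pos rfl]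
    intro i _ hi
    exact if_neg fun h => hi (Fin.ext h)
  · rw [add_zero, Finset.sum_eq_zero fun i _ => if_neg (by omega), add_zero]

lemma sum_cSMul_deltaValue_apply_of_lt (hr : 0 < r) (hD0 : D 0 = C θ)
    (hD : ∀ n, r < n → D n = 0) (c : Fin r → MvPowerSeries (Fin s) K) {n : ℕ} (hn : r < n) :
    (∑ i, cSMul K s (c i) (deltaValue θ D i)) n = 0 := by
  rw [sum_cSMul_deltaValue_apply hr hD0, if_neg (by omega), dif_neg (by omega), hD n hn,
    mul_zero, add_zero]

lemma sum_cSMul_deltaValue_sub (c c' : Fin r → MvPowerSeries (Fin s) K) :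
    ∑ i, cSMul K s (c i - c' i) (deltaValue θ D i) =
      ∑ i, cSMul K s (c i) (deltaValue θ D i) - ∑ i, cSMul K s (c' i) (deltaValue θ D i) := by
  simp only [cSMul_eq_smul, sub_smul, Finset.sum_sub_distrib]

lemma exists_sum_cSMul_deltaValue_eq [IsUltrametricDist K] (hr : 0 < r) (hD0 : D 0 = C θ)
    (hD : ∀ n, r < n → D n = 0) (hDT : ∀ n, IsTate K s (D n))
    {u : MvPowerSeries (Fin s) K} (huT : IsTate K s u) (hu : D r * u = 1)
    {h : ℕ →₀ MvPowerSeries (Fin s) K} (h0 : h 0 = 0) (hT : ∀ n, IsTate K s (h n))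
    (hdeg : ∀ n, r < n → h n = 0) :
    ∃ c : Fin r → MvPowerSeries (Fin s) K,
      (∀ i, IsTate K s (c i)) ∧ h = ∑ i, cSMul K s (c i) (deltaValue θ D i) := by
  set c₀ := h r * u
  have hc₀ : IsTate K s c₀ := (hT r).mul huT
  refine ⟨fun i => if (i : ℕ) = 0 then c₀ else h i - c₀ * D i, fun i => ?_, ?_⟩
  · dsimp only
    split_ifs
    · exact hc₀
    · exact (hT i).sub (hc₀.mul (hDT i))
  refine Finsupp.ext fun n => ?_
  rw [sum_cSMul_deltaValue_apply hr hD0]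
  dsimp only
  rw [if_pos rfl]
  rcases eq_or_ne n 0 with rfl | hn0
  · rw [if_pos rfl, h0]
  rw [if_neg hn0]
  rcases lt_trichotomy n r with hnr | rfl | hnr
  · rw [dif_pos hnr, if_neg hn0]
    ring
  · rw [dif_neg (lt_irrefl n), add_zero, mul_assoc, mul_comm u, hu, mul_one]
  · rw [dif_neg (by omega), hdeg n hnr, hD n hnr, mul_zero, add_zero]

lemma eq_zero_of_sum_cSMul_deltaValue_eq_zero (hr : 0 < r) (hD0 : D 0 = C θ)
    (hu : IsUnit (D r)) {c : Fin r → MvPowerSeries (Fin s) K}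
    (h : ∑ i, cSMul K s (c i) (deltaValue θ D i) = 0) : c = 0 := by
  have hcoeff (n : ℕ) := (sum_cSMul_deltaValue_apply hr hD0 c n).symm.trans
    (DFunLike.congr_fun h n)
  have hc₀ : c ⟨0, hr⟩ = 0 := by
    have := hcoeff r
    rw [if_neg hr.ne', dif_neg (lt_irrefl r), add_zero] at this
    exact hu.mul_left_eq_zero.1 this
  funext i
  rcases eq_or_ne (i : ℕ) 0 with hi | hi
  · rw [show i = ⟨0, hr⟩ from Fin.ext hi, hc₀, Pi.zero_apply]
  · have := hcoeff i
    rwa [if_neg hi, dif_pos i.isLt, hc₀, zero_mul, zero_add] at this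

end Basis

section Decomposition

variable {K : Type} [NontriviallyNormedField K] {s : ℕ}
  {tw : MvPowerSeries (Fin s) K →+* MvPowerSeries (Fin s) K} {θ : K}
  {D : ℕ →₀ MvPowerSeries (Fin s) K} {r : ℕ}

lemma exists_innerValue_eq_of_lt [IsUltrametricDist K]
    (htw : ∀ f, IsTate K s f → IsTate K s (tw f)) (hr : 0 < r) (hD : ∀ n, r < n → D n = 0)
    {u : MvPowerSeries (Fin s) K} (huT : IsTate K s u)
    (hu : D r * u = 1) {k : ℕ} {h : ℕ →₀ MvPowerSeries (Fin s) K} (hT : ∀ n, IsTate K s (h n))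
    (hdeg : ∀ n, k + 1 + r < n → h n = 0) :
    ∃ m : ℕ →₀ MvPowerSeries (Fin s) K, m 0 = 0 ∧ (∀ n, IsTate K s (m n)) ∧
      ∀ n, k + r < n → h n = innerValue tw θ D m n := by
  set c := h (k + 1 + r) * tw^[k + 1] u
  have hc : IsTate K s c := (hT _).mul (isTate_iterate htw _ huT)
  have hm : ∀ i, k + 1 < i → Finsupp.single (k + 1) c i = 0 :=
    fun i hi => Finsupp.single_eq_of_ne (by omega)
  refine ⟨Finsupp.single (k + 1) c, Finsupp.single_eq_of_ne (by omega), fun n => ?_,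
    fun n hn => ?_⟩
  · rw [Finsupp.single_apply]
    split_ifs
    · exact hc
    · exact isTate_zero
  rcases (show n = k + 1 + r ∨ k + 1 + r < n by omega) with rfl | hn
  · rw [innerValue_apply_add tw hr hD hm,
      Finsupp.single_eq_same, mul_assoc, ← iterate_map_mul, mul_comm u, hu, iterate_map_one,
      mul_one]
  · rw [hdeg n hn, innerValue_apply_eq_zero_of_lt tw hD hm hn]

lemma exists_decomposition_of_degree_le [IsUltrametricDist K]
    (htw : ∀ f, IsTate K s f → IsTate K s (tw f)) (hr : 0 < r) (hD0 : D 0 = C θ)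
    (hD : ∀ n, r < n → D n = 0) (hDT : ∀ n, IsTate K s (D n))
    {u : MvPowerSeries (Fin s) K} (huT : IsTate K s u) (hu : D r * u = 1) (N : ℕ)
    {h : ℕ →₀ MvPowerSeries (Fin s) K} (h0 : h 0 = 0) (hT : ∀ n, IsTate K s (h n))
    (hdeg : ∀ n, N + r < n → h n = 0) :
    ∃ c : Fin r → MvPowerSeries (Fin s) K, (∀ i, IsTate K s (c i)) ∧
      ∃ m : ℕ →₀ MvPowerSeries (Fin s) K, m 0 = 0 ∧ (∀ n, IsTate K s (m n)) ∧
        h = ∑ i, cSMul K s (c i) (deltaValue θ D i) + innerValue tw θ D m := by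
  induction N generalizing h with
  | zero =>
    obtain ⟨c, hc, rfl⟩ :=
      exists_sum_cSMul_deltaValue_eq hr hD0 hD hDT huT hu h0 hT (by simpa using hdeg)
    exact ⟨c, hc, 0, rfl, fun _ => isTate_zero, by simp⟩
  | succ N ih =>
    obtain ⟨m₁, hm₁0, hm₁T, hm₁⟩ := exists_innerValue_eq_of_lt htw hr hD huT hu hT hdeg
    obtain ⟨c, hc, m₂, hm₂0, hm₂T, hm₂⟩ := ih (h := h - innerValue tw θ D m₁)
      (by rw [Finsupp.sub_apply, h0, innerValue_apply_zero _ _ _ hm₁0, sub_zero])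
      (fun n => (hT n).sub (isTate_innerValue_apply tw htw hDT hm₁T n))
      (fun n hn => by rw [Finsupp.sub_apply, hm₁ n hn, sub_self])
    refine ⟨c, hc, m₂ + m₁, by simp [hm₁0, hm₂0],
      fun n => (hm₂T n).add (hm₁T n), ?_⟩
    rw [innerValue_add, ← add_assoc, ← hm₂, sub_add_cancel]

lemma exists_decomposition [IsUltrametricDist K]
    (htw : ∀ f, IsTate K s f → IsTate K s (tw f)) (hr : 0 < r) (hD0 : D 0 = C θ)
    (hD : ∀ n, r < n → D n = 0) (hDT : ∀ n, IsTate K s (D n))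
    {u : MvPowerSeries (Fin s) K} (huT : IsTate K s u) (hu : D r * u = 1)
    {h : ℕ →₀ MvPowerSeries (Fin s) K} (h0 : h 0 = 0) (hT : ∀ n, IsTate K s (h n)) :
    ∃ c : Fin r → MvPowerSeries (Fin s) K, (∀ i, IsTate K s (c i)) ∧
      ∃ m : ℕ →₀ MvPowerSeries (Fin s) K, m 0 = 0 ∧ (∀ n, IsTate K s (m n)) ∧
        h = ∑ i, cSMul K s (c i) (deltaValue θ D i) + innerValue tw θ D m :=
  exists_decomposition_of_degree_le htw hr hD0 hD hDT huT hu (h.support.sup id) h0 hT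
    fun n hn => Finsupp.notMem_support_iff.1 fun hmem => by
      have : n ≤ h.support.sup id := Finset.le_sup (f := id) hmem
      omega

lemma eq_zero_of_innerValue_apply_eq_zero (hr : 0 < r) (hD : ∀ n, r < n → D n = 0)
    (hu : IsUnit (D r)) {m : ℕ →₀ MvPowerSeries (Fin s) K} (hm0 : m 0 = 0)
    (h : ∀ n, r < n → innerValue tw θ D m n = 0) : m = 0 := by
  by_contra hne
  have hsupp : m.support.Nonempty := Finsupp.support_nonempty_iff.2 hne
  set d := m.support.max' hsupp
  have hd : m d ≠ 0 := Finsupp.mem_support_iff.1 (m.support.max'_mem hsupp)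
  have hdeg : ∀ i, d < i → m i = 0 := fun i hi =>
    Finsupp.notMem_support_iff.1 fun hmem => (m.support.le_max' i hmem).not_gt hi
  have hd0 : 0 < d := Nat.pos_of_ne_zero fun h0 => hd (h0 ▸ hm0)
  have htop := h (d + r) (by omega)
  rw [innerValue_apply_add tw hr hD hdeg] at htop
  exact hd ((hu.map (tw ^ d)).mul_left_eq_zero.1 htop)

lemma decomposition_unique (hr : 0 < r) (hD0 : D 0 = C θ) (hD : ∀ n, r < n → D n = 0)
    (hu : IsUnit (D r)) {c c' : Fin r → MvPowerSeries (Fin s) K}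
    {m m' : ℕ →₀ MvPowerSeries (Fin s) K} (hm0 : m 0 = 0) (hm'0 : m' 0 = 0)
    (h : ∑ i, cSMul K s (c i) (deltaValue θ D i) + innerValue tw θ D m =
      ∑ i, cSMul K s (c' i) (deltaValue θ D i) + innerValue tw θ D m') :
    c = c' := by
  have hdiff :
      ∑ i, cSMul K s (c i - c' i) (deltaValue θ D i) + innerValue tw θ D (m - m') = 0 := by
    rw [sum_cSMul_deltaValue_sub, innerValue_sub, sub_add_sub_comm, h, sub_self]
  have hm : m - m' = 0 := by
    refine eq_zero_of_innerValue_apply_eq_zero (tw := tw) (θ := θ) hr hD hu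
      (by simp [hm0, hm'0]) fun n hn => ?_
    have := DFunLike.congr_fun hdiff n
    rwa [Finsupp.add_apply, sum_cSMul_deltaValue_apply_of_lt hr hD0 hD _ hn, zero_add] at this
  rw [hm, innerValue_zero, add_zero] at hdiff
  funext i
  exact sub_eq_zero.1 (congrFun (eq_zero_of_sum_cSMul_deltaValue_eq_zero hr hD0 hu hdiff) i)

end Decomposition

theorem stmt13_general
    (K : Type) [NontriviallyNormedField K] [IsUltrametricDist K]
    (q : ℕ) (hq : IsPrimePow q)
    (τK : K ≃+* K) (hτK : ∀ x : K, τK x = x ^ q)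
    (s : ℕ) (r : ℕ) (hr : 0 < r)
    (θ : K)
    (Dθ : ℕ →₀ MvPowerSeries (Fin s) K)
    (hDθ0 : Dθ 0 = MvPowerSeries.C (σ := Fin s) (R := K) θ)
    (hDθtop : ∀ n : ℕ, r < n → Dθ n = 0)
    (hDθT : ∀ n, IsTate K s (Dθ n))
    (uinv : MvPowerSeries (Fin s) K) (huinvT : IsTate K s uinv)
    (huinv : Dθ r * uinv = 1)
    (φ : AtsSub K s q θ → (ℕ →₀ MvPowerSeries (Fin s) K))
    (θD : AtsSub K s q θ)
    (dval : Fin r → (ℕ →₀ MvPowerSeries (Fin s) K))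
    (hdval : ∀ i : Fin r, dval i =
      if (i : ℕ) = 0 then Dθ - Finsupp.single 0 (MvPowerSeries.C (σ := Fin s) (R := K) θ)
      else Finsupp.single (i : ℕ) 1)
    (η : AtsSub K s q θ → (ℕ →₀ MvPowerSeries (Fin s) K))
    (hη : IsBider K s q θ (twPS K s τK.toRingHom) φ η) :
    ∃ c : Fin r → MvPowerSeries (Fin s) K,
      (∀ i, IsTate K s (c i)) ∧
      (∃ mm : ℕ →₀ MvPowerSeries (Fin s) K,
        mm 0 = 0 ∧ (∀ n, IsTate K s (mm n)) ∧
        η θD = (∑ i : Fin r, cSMul K s (c i) (dval i))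
          + (tmulPS K s (twPS K s τK.toRingHom) mm Dθ
              - cSMul K s (MvPowerSeries.C (σ := Fin s) (R := K) θ) mm)) ∧
      (∀ (c' : Fin r → MvPowerSeries (Fin s) K)
        (mm' : ℕ →₀ MvPowerSeries (Fin s) K),
        (∀ i, IsTate K s (c' i)) → mm' 0 = 0 → (∀ n, IsTate K s (mm' n)) →
        η θD = (∑ i : Fin r, cSMul K s (c' i) (dval i))
          + (tmulPS K s (twPS K s τK.toRingHom) mm' Dθ
              - cSMul K s (MvPowerSeries.C (σ := Fin s) (R := K) θ) mm') →
        c' = c) := by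
  obtain rfl : dval = deltaValue θ Dθ := funext hdval
  have hτ : Tendsto τK.toRingHom (𝓝 0) (𝓝 0) := by
    convert (continuous_pow q).tendsto (0 : K) using 2
    · exact hτK _
    · rw [zero_pow hq.pos.ne']
  obtain ⟨c, hc, m, hm0, hm, hηθ⟩ := exists_decomposition (fun f => isTate_twPS hτ) hr hDθ0
    hDθtop hDθT huinvT huinv (hη.2.2.1 θD) (hη.2.2.2.1 θD)
  exact ⟨c, hc, ⟨m, hm0, hm, hηθ⟩, fun c' m' _ hm'0 _ hηθ' =>
    decomposition_unique hr hDθ0 hDθtop (IsUnit.of_mul_eq_one _ huinv) hm'0 hm0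
      (hηθ'.symm.trans hηθ)⟩

/-- for `A_r ∈ 𝕋_s^×`, the de Rham module
`H*_DR(φ) = Der(φ)/Der_si(φ)` is a free `𝕋_s`-module of rank `r` with basis the
classes of `δ^0, …, δ^{r-1}`, where `δ^0_θ = φ_θ - θ` and `δ^i_θ = τ^i` (`1 ≤ i < r`):
every biderivation `η` satisfies `η_θ ≡ Σ_i c_i δ^i_θ` modulo values of strictly inner
biderivations, with uniquely determined `c_i ∈ 𝕋_s`. -/
theorem stmt13
    (K : Type) [NontriviallyNormedField K] [IsUltrametricDist K] [CompleteSpace K]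
    (q : ℕ) (hq : IsPrimePow q)
    (τK : K ≃+* K) (hτK : ∀ x : K, τK x = x ^ q)
    (s : ℕ) (r : ℕ) (hr : 0 < r)
    (θ : K) (hθ : ‖θ‖ = q)
    (Dθ : ℕ →₀ MvPowerSeries (Fin s) K)
    (hDθ0 : Dθ 0 = MvPowerSeries.C (σ := Fin s) (R := K) θ)
    (hDθtop : ∀ n : ℕ, r < n → Dθ n = 0)
    (hDθT : ∀ n, IsTate K s (Dθ n))
    (uinv : MvPowerSeries (Fin s) K) (huinvT : IsTate K s uinv)
    (huinv : Dθ r * uinv = 1)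
    (φ : AtsSub K s q θ → (ℕ →₀ MvPowerSeries (Fin s) K))
    (hφ : IsDrinfeldHom K s q θ (twPS K s τK.toRingHom) Dθ φ)
    (θD : AtsSub K s q θ)
    (hθD : (θD : MvPowerSeries (Fin s) K) = MvPowerSeries.C (σ := Fin s) (R := K) θ)
    (dval : Fin r → (ℕ →₀ MvPowerSeries (Fin s) K))
    (hdval : ∀ i : Fin r, dval i =
      if (i : ℕ) = 0 then Dθ - Finsupp.single 0 (MvPowerSeries.C (σ := Fin s) (R := K) θ)
      else Finsupp.single (i : ℕ) 1)
    (η : AtsSub K s q θ → (ℕ →₀ MvPowerSeries (Fin s) K))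
    (hη : IsBider K s q θ (twPS K s τK.toRingHom) φ η) :
    ∃ c : Fin r → MvPowerSeries (Fin s) K,
      (∀ i, IsTate K s (c i)) ∧
      (∃ mm : ℕ →₀ MvPowerSeries (Fin s) K,
        mm 0 = 0 ∧ (∀ n, IsTate K s (mm n)) ∧
        η θD = (∑ i : Fin r, cSMul K s (c i) (dval i))
          + (tmulPS K s (twPS K s τK.toRingHom) mm Dθ
              - cSMul K s (MvPowerSeries.C (σ := Fin s) (R := K) θ) mm)) ∧
      (∀ (c' : Fin r → MvPowerSeries (Fin s) K)
        (mm' : ℕ →₀ MvPowerSeries (Fin s) K),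
        (∀ i, IsTate K s (c' i)) → mm' 0 = 0 → (∀ n, IsTate K s (mm' n)) →
        η θD = (∑ i : Fin r, cSMul K s (c' i) (dval i))
          + (tmulPS K s (twPS K s τK.toRingHom) mm' Dθ
              - cSMul K s (MvPowerSeries.C (σ := Fin s) (R := K) θ) mm') →
        c' = c) :=
  stmt13_general K q hq τK hτK s r hr θ Dθ hDθ0 hDθtop hDθT uinv huinvT huinv φ θD dval hdval η hη
end
end
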